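/- Let g be a Lie algebra and σ a 2-cocycle on g. Let g⁰ denote the abelian Lie algebra on the module g and g⁺ = g⁰ ⊕ g with bracket [y⁰,z⁰]⁺ = 0, [y⁰,z¹]⁺ = [y,z]⁰, [y¹,z¹]⁺ = [y,z]¹. Then g⁺ is a Lie algebra, and the bilinear form σ⁺ defined by σ⁺(x⁰,y⁰) = σ⁺(x¹,y¹) = 0 and σ⁺(x⁰,y¹) = σ⁺(x¹,y⁰) = σ(x,y) is a 2-cocycle in the trivial Lie algebra cohomology of g⁺. -/

import Mathlib

/-!
Identify `g⁺` with `g ⊗ R[ε]/(ε²)` by sending `(y, z)` to `z + ε y`, so that `g⁰ = ε g`.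
Then `doubleBracket` is the scalar extension of the bracket of `g` and `σ⁺` is the
`ε`-coefficient of the scalar extension of `σ`. Each identity for `g⁺` therefore splits into
its `1`- and `ε`-coefficients, and the `ε`-coefficient is the sum of the corresponding
identities in `g` with exactly one argument taken from `g⁰`.
-/

/-- The bracket of the double `g⁺ = g⁰ ⊕ g` of a Lie algebra `g`: writing
`x⁺ = (y, z) = y⁰ + z¹`, it is `[x₁⁺, x₂⁺]⁺ = [y₁,z₂]⁰ + [z₁,y₂]⁰ + [z₁,z₂]¹`. -/
def doubleBracket {g : Type*} [LieRing g] (x₁ x₂ : g × g) : g × g :=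
  (⁅x₁.1, x₂.2⁆ + ⁅x₁.2, x₂.1⁆, ⁅x₁.2, x₂.2⁆)

/-- The extension `σ⁺` to `g⁺ = g⁰ ⊕ g` of a bilinear form `σ` on `g`:
`σ⁺(x⁰,y⁰) = σ⁺(x¹,y¹) = 0` and `σ⁺(x⁰,y¹) = σ⁺(x¹,y⁰) = σ(x,y)`. -/
def doubleCocycle {R g : Type*} [CommRing R] [LieRing g] [LieAlgebra R g]
    (σ : g →ₗ[R] g →ₗ[R] R) (x₁ x₂ : g × g) : R :=
  σ x₁.1 x₂.2 + σ x₁.2 x₂.1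

section Bracket

variable {g : Type*} [LieRing g]

theorem doubleBracket_inl_inl (y z : g) : doubleBracket ((y, 0) : g × g) (z, 0) = 0 := by
  simp [doubleBracket]

theorem doubleBracket_inl_inr (y z : g) :
    doubleBracket ((y, 0) : g × g) (0, z) = (⁅y, z⁆, 0) := by
  simp [doubleBracket]

theorem doubleBracket_inr_inr (y z : g) :
    doubleBracket ((0, y) : g × g) (0, z) = (0, ⁅y, z⁆) := by
  simp [doubleBracket]

theorem doubleBracket_self (x : g × g) : doubleBracket x x = 0 := by
  ext
  · simp only [doubleBracket, Prod.fst_zero]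
    rw [← lie_skew x.2 x.1, add_neg_cancel]
  · simp [doubleBracket]

theorem doubleBracket_jacobi (x y z : g × g) :
    doubleBracket x (doubleBracket y z) + doubleBracket y (doubleBracket z x) +
      doubleBracket z (doubleBracket x y) = 0 := by
  ext
  · simp only [doubleBracket, Prod.fst_add, Prod.fst_zero, lie_add]
    linear_combination (norm := abel) lie_jacobi x.1 y.2 z.2 + lie_jacobi x.2 y.1 z.2 +
      lie_jacobi x.2 y.2 z.1
  · simpa only [doubleBracket, Prod.snd_add, Prod.snd_zero] using lie_jacobi x.2 y.2 z.2

variable {R : Type*} [CommRing R] [LieAlgebra R g]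

theorem doubleBracket_add_smul_left (r : R) (x₁ x₁' x₂ : g × g) :
    doubleBracket (x₁ + r • x₁') x₂ = doubleBracket x₁ x₂ + r • doubleBracket x₁' x₂ := by
  ext
  · simp only [doubleBracket, Prod.fst_add, Prod.snd_add, Prod.smul_fst, Prod.smul_snd,
      add_lie, smul_lie, smul_add]
    abel
  · simp [doubleBracket]

theorem doubleBracket_add_smul_right (r : R) (x₁ x₂ x₂' : g × g) :
    doubleBracket x₁ (x₂ + r • x₂') = doubleBracket x₁ x₂ + r • doubleBracket x₁ x₂' := by
  ext
  · simp only [doubleBracket, Prod.fst_add, Prod.snd_add, Prod.smul_fst, Prod.smul_snd,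
      lie_add, lie_smul, smul_add]
    abel
  · simp [doubleBracket]

end Bracket

section Cocycle

variable {R g : Type*} [CommRing R] [LieRing g] [LieAlgebra R g] (σ : g →ₗ[R] g →ₗ[R] R)

theorem doubleCocycle_inl_inl (x y : g) : doubleCocycle σ ((x, 0) : g × g) (y, 0) = 0 := by
  simp [doubleCocycle]

theorem doubleCocycle_inr_inr (x y : g) : doubleCocycle σ ((0, x) : g × g) (0, y) = 0 := by
  simp [doubleCocycle]

theorem doubleCocycle_inl_inr (x y : g) : doubleCocycle σ ((x, 0) : g × g) (0, y) = σ x y := by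
  simp [doubleCocycle]

theorem doubleCocycle_inr_inl (x y : g) : doubleCocycle σ ((0, x) : g × g) (y, 0) = σ x y := by
  simp [doubleCocycle]

variable {σ}

theorem doubleCocycle_skew (hσ : ∀ x y : g, σ x y = - σ y x) (x y : g × g) :
    doubleCocycle σ x y = - doubleCocycle σ y x := by
  unfold doubleCocycle
  linear_combination hσ x.1 y.2 + hσ x.2 y.1

theorem doubleCocycle_cocycle (hσ : ∀ x y z : g, σ ⁅x, y⁆ z + σ ⁅y, z⁆ x + σ ⁅z, x⁆ y = 0)
    (x y z : g × g) :
    doubleCocycle σ (doubleBracket x y) z + doubleCocycle σ (doubleBracket y z) x +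
      doubleCocycle σ (doubleBracket z x) y = 0 := by
  simp only [doubleCocycle, doubleBracket, map_add, LinearMap.add_apply]
  linear_combination hσ x.1 y.2 z.2 + hσ x.2 y.1 z.2 + hσ x.2 y.2 z.1

end Cocycle

/-- Let `g` be a Lie algebra over `R` and `σ` a 2-cocycle in the trivial
Lie algebra cohomology of `g`. Then `g⁺ = g⁰ ⊕ g` with the bracket
`[y⁰,z⁰]⁺ = 0`, `[y⁰,z¹]⁺ = [y,z]⁰`, `[y¹,z¹]⁺ = [y,z]¹` is a Lie algebra, and `σ⁺`
is a 2-cocycle in the trivial Lie algebra cohomology of `g⁺`. -/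
theorem double_is_lie_algebra_and_cocycle {R g : Type*}
    [CommRing R] [LieRing g] [LieAlgebra R g]
    (σ : g →ₗ[R] g →ₗ[R] R)
    (hσskew : ∀ x y : g, σ x y = - σ y x)
    (hσcocycle : ∀ x y z : g, σ ⁅x, y⁆ z + σ ⁅y, z⁆ x + σ ⁅z, x⁆ y = 0) :
    -- the bracket has the stated values on the two summands:
    (∀ y z : g, doubleBracket ((y, 0) : g × g) (z, 0) = 0) ∧
    (∀ y z : g, doubleBracket ((y, 0) : g × g) (0, z) = (⁅y, z⁆, 0)) ∧
    (∀ y z : g, doubleBracket ((0, y) : g × g) (0, z) = (0, ⁅y, z⁆)) ∧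
    -- `g⁺` is a Lie algebra: the bracket is bilinear, alternating and Jacobi:
    (∀ (r : R) (x₁ x₁' x₂ : g × g),
      doubleBracket (x₁ + r • x₁') x₂ = doubleBracket x₁ x₂ + r • doubleBracket x₁' x₂) ∧
    (∀ (r : R) (x₁ x₂ x₂' : g × g),
      doubleBracket x₁ (x₂ + r • x₂') = doubleBracket x₁ x₂ + r • doubleBracket x₁ x₂') ∧
    (∀ x : g × g, doubleBracket x x = 0) ∧
    (∀ x y z : g × g,
      doubleBracket x (doubleBracket y z) + doubleBracket y (doubleBracket z x) +
        doubleBracket z (doubleBracket x y) = 0) ∧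
    -- `σ⁺` has the stated values on the two summands:
    (∀ x y : g, doubleCocycle σ ((x, 0) : g × g) (y, 0) = 0) ∧
    (∀ x y : g, doubleCocycle σ ((0, x) : g × g) (0, y) = 0) ∧
    (∀ x y : g, doubleCocycle σ ((x, 0) : g × g) (0, y) = σ x y) ∧
    (∀ x y : g, doubleCocycle σ ((0, x) : g × g) (y, 0) = σ x y) ∧
    -- `σ⁺` is a skew-symmetric 2-cocycle on `g⁺`:
    (∀ x y : g × g, doubleCocycle σ x y = - doubleCocycle σ y x) ∧
    (∀ x y z : g × g,
      doubleCocycle σ (doubleBracket x y) z + doubleCocycle σ (doubleBracket y z) x +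
        doubleCocycle σ (doubleBracket z x) y = 0) :=
  ⟨doubleBracket_inl_inl, doubleBracket_inl_inr, doubleBracket_inr_inr,
    doubleBracket_add_smul_left, doubleBracket_add_smul_right, doubleBracket_self,
    doubleBracket_jacobi, doubleCocycle_inl_inl σ, doubleCocycle_inr_inr σ,
    doubleCocycle_inl_inr σ, doubleCocycle_inr_inl σ, doubleCocycle_skew hσskew,
    doubleCocycle_cocycle hσcocycle⟩
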